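/- Let P be a symmetric idempotent real n×n matrix (Pᵀ = P and P² = P), let D⋆ be a diagonal real n×n matrix, and let V be a random vector in ℝ^n whose law is the n-fold product of the standard normal distribution N(0,1). Then the real random variables Vᵀ (P D⋆² P) V and Vᵀ (D⋆ P D⋆) V are identically distributed. -/

import Mathlib

/-!
With `M = P₀ D⋆`, the two matrices are `M Mᵀ` and `Mᵀ M`. These symmetric matrices have the same
characteristic polynomial, so the spectral theorem makes them orthogonally conjugate,
`M Mᵀ = U (Mᵀ M) Uᵀ`. Hence `Vᵀ (M Mᵀ) V = (Uᵀ V)ᵀ (Mᵀ M) (Uᵀ V)`, and `Uᵀ V` is again a standard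
Gaussian vector because the standard Gaussian measure is invariant under orthogonal maps.
-/

open Matrix MeasureTheory ProbabilityTheory

theorem Matrix.IsHermitian.exists_unitary_conj_eq_of_charpoly_eq {𝕜 ι : Type*} [RCLike 𝕜]
    [Fintype ι] [DecidableEq ι] {A B : Matrix ι ι 𝕜} (hA : A.IsHermitian) (hB : B.IsHermitian)
    (h : A.charpoly = B.charpoly) :
    ∃ U ∈ unitaryGroup ι 𝕜, A = U * B * star U := by
  have hAB := (hA.eigenvalues_eq_eigenvalues_iff hB).2 h
  refine ⟨_, (hA.eigenvectorUnitary * star hB.eigenvectorUnitary).2, ?_⟩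
  conv_lhs => rw [hA.spectral_theorem, hAB, ← hB.conjStarAlgAut_star_eigenvectorUnitary]
  simp only [Unitary.conjStarAlgAut_apply, Submonoid.coe_mul, Unitary.coe_star, star_mul,
    star_star, Matrix.mul_assoc]

theorem Matrix.dotProduct_mulVec_conj {R ι : Type*} [CommSemiring R] [Fintype ι]
    (U B : Matrix ι ι R) (x : ι → R) :
    x ⬝ᵥ (U * B * Uᵀ) *ᵥ x = (Uᵀ *ᵥ x) ⬝ᵥ B *ᵥ (Uᵀ *ᵥ x) := by
  rw [← mulVec_mulVec, ← mulVec_mulVec, dotProduct_mulVec, mulVec_transpose]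

theorem map_mulVec_pi_gaussianReal {ι : Type*} [Fintype ι] [DecidableEq ι] {U : Matrix ι ι ℝ}
    (hU : U ∈ unitaryGroup ι ℝ) :
    (Measure.pi fun _ : ι ↦ gaussianReal 0 1).map (U *ᵥ ·) =
      Measure.pi fun _ ↦ gaussianReal 0 1 := by
  let e := Unitary.linearIsometryEquiv ⟨_, Unitary.map_mem (toEuclideanCLM (𝕜 := ℝ) (n := ι)) hU⟩
  have hpi : Measure.pi (fun _ : ι ↦ gaussianReal 0 1) =
      (stdGaussian (EuclideanSpace ℝ ι)).map WithLp.ofLp := by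
    rw [← map_pi_eq_stdGaussian, Measure.map_map (by fun_prop) (by fun_prop)]
    exact Measure.map_id.symm
  have hcomm : (U *ᵥ ·) ∘ WithLp.ofLp = WithLp.ofLp ∘ e := rfl
  rw [hpi, Measure.map_map (by fun_prop) (by fun_prop), hcomm,
    ← Measure.map_map (by fun_prop) (by fun_prop), stdGaussian_map]

theorem identDistrib_dotProduct_mulVec_of_charpoly_eq {ι : Type*} [Fintype ι] [DecidableEq ι]
    {A B : Matrix ι ι ℝ} (hA : A.IsHermitian) (hB : B.IsHermitian) (h : A.charpoly = B.charpoly) :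
    IdentDistrib (fun x ↦ x ⬝ᵥ A *ᵥ x) (fun x ↦ x ⬝ᵥ B *ᵥ x)
      (Measure.pi fun _ : ι ↦ gaussianReal 0 1) (Measure.pi fun _ : ι ↦ gaussianReal 0 1) := by
  obtain ⟨U, hU, rfl⟩ := hA.exists_unitary_conj_eq_of_charpoly_eq hB h
  rw [star_eq_conjTranspose, conjTranspose_eq_transpose_of_trivial]
  have hrot : IdentDistrib (Uᵀ *ᵥ ·) id (Measure.pi fun _ : ι ↦ gaussianReal 0 1)
      (Measure.pi fun _ : ι ↦ gaussianReal 0 1) :=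
    ⟨by fun_prop, aemeasurable_id, by
      rw [map_mulVec_pi_gaussianReal (transpose_mem_unitaryGroup_iff.2 hU), Measure.map_id]⟩
  have hquad : (fun x ↦ x ⬝ᵥ (U * B * Uᵀ) *ᵥ x) = (fun y ↦ y ⬝ᵥ B *ᵥ y) ∘ (Uᵀ *ᵥ ·) :=
    funext (dotProduct_mulVec_conj U B)
  rw [hquad]
  exact hrot.comp (by fun_prop)

theorem identDistrib_dotProduct_mul_transpose_self {ι : Type*} [Fintype ι] [DecidableEq ι]
    (M : Matrix ι ι ℝ) :
    IdentDistrib (fun x ↦ x ⬝ᵥ (M * Mᵀ) *ᵥ x) (fun x ↦ x ⬝ᵥ (Mᵀ * M) *ᵥ x)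
      (Measure.pi fun _ : ι ↦ gaussianReal 0 1) (Measure.pi fun _ : ι ↦ gaussianReal 0 1) := by
  have h₁ := isHermitian_mul_conjTranspose_self M
  have h₂ := isHermitian_conjTranspose_mul_self M
  rw [conjTranspose_eq_transpose_of_trivial] at h₁ h₂
  exact identDistrib_dotProduct_mulVec_of_charpoly_eq h₁ h₂ (charpoly_mul_comm _ _)

theorem identDistrib_quadForm_proj_diag_general
    (n : ℕ) (P₀ : Matrix (Fin n) (Fin n) ℝ)
    (hsymm : P₀ᵀ = P₀) (hidem : P₀ * P₀ = P₀)
    (d : Fin n → ℝ) (Dstar : Matrix (Fin n) (Fin n) ℝ)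
    (hD : Dstar = Matrix.diagonal d)
    {Ω : Type*} [MeasurableSpace Ω] (P : Measure Ω)
    (V : Ω → (Fin n → ℝ))
    (hVlaw : Measure.map V P =
      Measure.pi (fun _ : Fin n => gaussianReal 0 1)) :
    IdentDistrib
      (fun ω => ∑ i, ∑ j, V ω i * (P₀ * Dstar ^ 2 * P₀) i j * V ω j)
      (fun ω => ∑ i, ∑ j, V ω i * (Dstar * P₀ * Dstar) i j * V ω j)
      P P := by
  set M := P₀ * Dstar
  have hDsymm : Dstarᵀ = Dstar := by rw [hD, diagonal_transpose]
  have hA : P₀ * Dstar ^ 2 * P₀ = M * Mᵀ := by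
    rw [transpose_mul, hDsymm, hsymm, sq]
    simp only [M, Matrix.mul_assoc]
  have hB : Dstar * P₀ * Dstar = Mᵀ * M := by
    rw [transpose_mul, hDsymm, hsymm, ← Matrix.mul_assoc, Matrix.mul_assoc Dstar P₀ P₀, hidem]
  have hV : IdentDistrib V id P (Measure.pi fun _ : Fin n ↦ gaussianReal 0 1) :=
    ⟨aemeasurable_of_map_neZero (by rw [hVlaw]; infer_instance), aemeasurable_id,
      by rw [hVlaw, Measure.map_id]⟩
  simp only [← toBilin'_apply, toBilin'_apply', hA, hB]
  exact ((hV.comp (u := fun x ↦ x ⬝ᵥ (M * Mᵀ) *ᵥ x) (by fun_prop)).trans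
    (identDistrib_dotProduct_mul_transpose_self M)).trans
    (hV.comp (u := fun x ↦ x ⬝ᵥ (Mᵀ * M) *ᵥ x) (by fun_prop)).symm

/-- if `P₀` is symmetric idempotent, `D⋆` diagonal, and `V` a
standard Gaussian vector in `ℝ^n`, then `Vᵀ (P₀ D⋆² P₀) V` and `Vᵀ (D⋆ P₀ D⋆) V`
are identically distributed. -/
theorem identDistrib_quadForm_proj_diag
    (n : ℕ) (P₀ : Matrix (Fin n) (Fin n) ℝ)
    (hsymm : P₀ᵀ = P₀) (hidem : P₀ * P₀ = P₀)
    (d : Fin n → ℝ) (Dstar : Matrix (Fin n) (Fin n) ℝ)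
    (hD : Dstar = Matrix.diagonal d)
    {Ω : Type*} [MeasurableSpace Ω] (P : Measure Ω) [IsProbabilityMeasure P]
    (V : Ω → (Fin n → ℝ)) (hVmeas : Measurable V)
    (hVlaw : Measure.map V P =
      Measure.pi (fun _ : Fin n => gaussianReal 0 1)) :
    IdentDistrib
      (fun ω => ∑ i, ∑ j, V ω i * (P₀ * Dstar ^ 2 * P₀) i j * V ω j)
      (fun ω => ∑ i, ∑ j, V ω i * (Dstar * P₀ * Dstar) i j * V ω j)
      P P :=
  identDistrib_quadForm_proj_diag_general n P₀ hsymm hidem d Dstar hD P V hVlaw
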